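/- arXiv:2004.07201 — 7 statements merged into one kernel-verified Lean document; each statement's English description precedes it below -/
import Mathlib

section
/- Let k ≥ 2 and let I be the space of homogeneous quadratic polynomials in variables x_0,...,x_k spanned by the 2×2 minors of the 2×k Hankel matrix with rows (0!x_0, ..., (k-1)!x_{k-1}) and (1!x_1, ..., k!x_k). Then I contains no nonzero quadratic form of rank ≤ 2. -/
/-!
On the moment curve `γ(t) = (tⁱ / i!)ᵢ` we have `i! γᵢ(t) = tⁱ`, so the second row of the Hankel
matrix is `t` times the first and every quadric of `I` vanishes on `γ`. Diagonalising a symmetric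
matrix `A` of rank `≤ 2` writes `q = μ₁ ℓ₁² + μ₂ ℓ₂²` with orthonormal linear forms `ℓ₁, ℓ₂`, and
along `γ` these become linearly independent polynomials `P₁, P₂ ∈ ℝ[t]` with `μ₁ P₁² + μ₂ P₂² = 0`.
If `μ₁ ≠ 0`, then `P₁² = c P₂²` makes `P₁` a multiple of `P₂` (factor a difference of squares if
`c ≥ 0`, use positivity if `c < 0`), contradicting independence; so `μ = 0`, `A = 0` and `q = 0`.
-/

open Nat Matrix

namespace Polynomial

theorem exists_eq_C_mul_of_sq_eq_C_mul_sq {P Q : ℝ[X]} {c : ℝ} (h : P ^ 2 = C c * Q ^ 2) :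
    ∃ r, P = C r * Q := by
  rcases le_or_gt 0 c with hc | hc
  · have hsqrt : C √c ^ 2 = C c := by rw [← C_pow, Real.sq_sqrt hc]
    have hfactor : (P - C √c * Q) * (P + C √c * Q) = 0 := by
      linear_combination h - Q ^ 2 * hsqrt
    rcases mul_eq_zero.mp hfactor with h' | h'
    · exact ⟨√c, sub_eq_zero.mp h'⟩
    · exact ⟨-√c, by rw [C_neg, neg_mul]; exact eq_neg_of_add_eq_zero_left h'⟩
  · refine ⟨0, Polynomial.funext fun t => ?_⟩
    have ht := congrArg (eval t) h
    simp only [eval_pow, eval_mul, eval_C] at ht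
    simp only [C_0, zero_mul, eval_zero]
    nlinarith [sq_nonneg (P.eval t), sq_nonneg (Q.eval t)]

theorem mem_span_singleton_of_C_mul_sq_add_C_mul_sq_eq_zero {P Q : ℝ[X]} {a b : ℝ}
    (ha : a ≠ 0) (h : C a * P ^ 2 + C b * Q ^ 2 = 0) : P ∈ ℝ ∙ Q := by
  have hinv : C a⁻¹ * C a = 1 := by rw [← C_mul, inv_mul_cancel₀ ha, C_1]
  have hc : C (-b / a) = -(C a⁻¹ * C b) := by rw [← C_mul, ← C_neg, neg_div, div_eq_inv_mul]
  obtain ⟨r, hr⟩ := exists_eq_C_mul_of_sq_eq_C_mul_sq (P := P) (Q := Q) (c := -b / a) (by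
    rw [hc]
    linear_combination C a⁻¹ * h - P ^ 2 * hinv)
  exact Submodule.mem_span_singleton.mpr ⟨r, by rw [hr, smul_eq_C_mul]⟩

theorem eq_zero_of_linearIndependent_of_sum_C_mul_sq_eq_zero {ι : Type*} [Fintype ι]
    {P : ι → ℝ[X]} (hP : LinearIndependent ℝ P) {μ : ι → ℝ}
    (hμ : Fintype.card {l // μ l ≠ 0} ≤ 2) (h : ∑ l, C (μ l) * P l ^ 2 = 0) : μ = 0 := by
  classical
  set s : Finset ι := {l | μ l ≠ 0}
  have hs : s.card ≤ 2 := by rwa [← Fintype.card_subtype]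
  have hsum : ∑ l ∈ s, C (μ l) * P l ^ 2 = 0 := by
    rw [← h]
    exact Finset.sum_filter_of_ne fun l _ hl hμl => by simp [hμl] at hl
  have hμs : ∀ l ∈ s, μ l ≠ 0 := fun l hl => (Finset.mem_filter.mp hl).2
  interval_cases hcard : s.card
  · ext l
    by_contra hl
    exact Finset.card_ne_zero_of_mem (Finset.mem_filter.mpr ⟨Finset.mem_univ l, hl⟩) hcard
  · obtain ⟨a, hsa⟩ := Finset.card_eq_one.mp hcard
    rw [hsa, Finset.sum_singleton] at hsum
    have hPa : P a = 0 := by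
      simpa [hμs a (hsa ▸ Finset.mem_singleton_self a)] using hsum
    exact absurd hPa (hP.ne_zero a)
  · obtain ⟨a, b, hab, hsab⟩ := Finset.card_eq_two.mp hcard
    rw [hsab, Finset.sum_pair hab] at hsum
    have hspan := mem_span_singleton_of_C_mul_sq_add_C_mul_sq_eq_zero (hμs a (by simp [hsab])) hsum
    refine absurd ?_ (hP.notMem_span_image (s := {b}) (x := a) (by simpa using hab))
    simpa using hspan

end Polynomial

theorem Matrix.IsHermitian.dotProduct_mulVec_self_eq_sum {n : Type*} [Fintype n] [DecidableEq n]
    {A : Matrix n n ℝ} (hA : A.IsHermitian) (x : n → ℝ) :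
    x ⬝ᵥ A *ᵥ x = ∑ l, hA.eigenvalues l * (⇑(hA.eigenvectorBasis l) ⬝ᵥ x) ^ 2 := by
  have hx := congrArg WithLp.ofLp (hA.eigenvectorBasis.sum_repr (WithLp.toLp 2 x))
  simp only [OrthonormalBasis.repr_apply_apply, EuclideanSpace.inner_eq_star_dotProduct,
    star_trivial, WithLp.ofLp_sum, WithLp.ofLp_smul] at hx
  nth_rewrite 2 [← hx]
  simp only [mulVec_sum, mulVec_smul, hA.mulVec_eigenvectorBasis, dotProduct_sum, dotProduct_smul,
    smul_eq_mul]
  exact Finset.sum_congr rfl fun l _ => by rw [dotProduct_comm x]; ring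

theorem MvPolynomial.eval_sum_C_mul_X_mul_X {R σ : Type*} [CommRing R] [Fintype σ]
    (A : Matrix σ σ R) (x : σ → R) :
    eval x (∑ i, ∑ j, C (A i j) * X i * X j) = x ⬝ᵥ A *ᵥ x := by
  simp only [map_sum, map_mul, eval_C, eval_X, dotProduct, mulVec, Finset.mul_sum]
  exact Finset.sum_congr rfl fun i _ => Finset.sum_congr rfl fun j _ => by ring

noncomputable def momentCurve (k : ℕ) (t : ℝ) : Fin (k + 1) → ℝ := fun i => t ^ (i : ℕ) / (i : ℕ)!

noncomputable def momentPoly (k : ℕ) : (Fin (k + 1) → ℝ) →ₗ[ℝ] Polynomial ℝ :=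
  Fintype.linearCombination ℝ fun i => Polynomial.C ((i : ℕ)! : ℝ)⁻¹ * Polynomial.X ^ (i : ℕ)

theorem eval_momentPoly (k : ℕ) (v : Fin (k + 1) → ℝ) (t : ℝ) :
    (momentPoly k v).eval t = v ⬝ᵥ momentCurve k t := by
  simp [momentPoly, Fintype.linearCombination_apply, Polynomial.eval_finsetSum, dotProduct,
    momentCurve, div_eq_inv_mul]

theorem coeff_momentPoly (k : ℕ) (v : Fin (k + 1) → ℝ) (i : Fin (k + 1)) :
    (momentPoly k v).coeff i = v i / (i : ℕ)! := by
  simp [momentPoly, Fintype.linearCombination_apply, Polynomial.coeff_X_pow, Fin.val_eq_val,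
    div_eq_mul_inv]

theorem momentPoly_injective (k : ℕ) : Function.Injective (momentPoly k) := by
  intro v w hvw
  funext i
  simpa [coeff_momentPoly, cast_ne_zero.mpr (factorial_ne_zero _)] using
    congrArg (Polynomial.coeff · i) hvw

open MvPolynomial

def hankelMinors (k : ℕ) : Set (MvPolynomial (Fin (k + 1)) ℝ) :=
  {p | ∃ a b : Fin k,
    p = (C ((a.val).factorial : ℝ) * X a.castSucc) * (C ((b.val + 1).factorial : ℝ) * X b.succ) -
      (C ((b.val).factorial : ℝ) * X b.castSucc) * (C ((a.val + 1).factorial : ℝ) * X a.succ)}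

theorem eval_momentCurve_eq_zero_of_mem_span_hankelMinors {k : ℕ}
    {q : MvPolynomial (Fin (k + 1)) ℝ} (hq : q ∈ Submodule.span ℝ (hankelMinors k)) (t : ℝ) :
    eval (momentCurve k t) q = 0 := by
  induction hq using Submodule.span_induction with
  | mem p hp =>
    obtain ⟨a, b, rfl⟩ := hp
    simp only [map_sub, map_mul, eval_C, eval_X, momentCurve, Fin.val_castSucc, Fin.val_succ]
    field_simp
    ring
  | zero => exact map_zero _
  | add p q _ _ hp hq => rw [map_add, hp, hq, add_zero]
  | smul r p _ hp => rw [smul_eq_C_mul, map_mul, hp, mul_zero]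

theorem hankel_ideal_no_low_rank_quadrics_general (k : ℕ)
    (q : MvPolynomial (Fin (k + 1)) ℝ)
    (hq : q ∈ Submodule.span ℝ
      {p : MvPolynomial (Fin (k + 1)) ℝ | ∃ a b : Fin k,
        p = (C ((a.val).factorial : ℝ) * X a.castSucc) *
              (C ((b.val + 1).factorial : ℝ) * X b.succ) -
            (C ((b.val).factorial : ℝ) * X b.castSucc) *
              (C ((a.val + 1).factorial : ℝ) * X a.succ)})
    (A : Matrix (Fin (k + 1)) (Fin (k + 1)) ℝ) (hA : A.IsSymm) (hrank : A.rank ≤ 2)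
    (hqA : q = ∑ i : Fin (k + 1), ∑ j : Fin (k + 1), C (A i j) * X i * X j) :
    q = 0 := by
  have hH : A.IsHermitian := isHermitian_iff_isSymm.mpr hA
  set P : Fin (k + 1) → Polynomial ℝ := fun l => momentPoly k (hH.eigenvectorBasis l)
  have hP : LinearIndependent ℝ P :=
    hH.eigenvectorBasis.orthonormal.linearIndependent.map'
      (momentPoly k ∘ₗ (WithLp.linearEquiv 2 ℝ (Fin (k + 1) → ℝ)).toLinearMap)
      (LinearMap.ker_eq_bot.mpr ((momentPoly_injective k).comp (WithLp.linearEquiv 2 ℝ _).injective))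
  have hsum : ∑ l, Polynomial.C (hH.eigenvalues l) * P l ^ 2 = 0 := Polynomial.funext fun t => by
    rw [Polynomial.eval_zero, ← eval_momentCurve_eq_zero_of_mem_span_hankelMinors hq t, hqA,
      eval_sum_C_mul_X_mul_X, hH.dotProduct_mulVec_self_eq_sum]
    simp [P, Polynomial.eval_finsetSum, eval_momentPoly]
  have hμ := Polynomial.eq_zero_of_linearIndependent_of_sum_C_mul_sq_eq_zero hP
    (hH.rank_eq_card_non_zero_eigs ▸ hrank) hsum
  rw [hqA, hH.eigenvalues_eq_zero_iff.mp hμ]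
  simp

/-- The span `I` of the `2×2` minors of the Hankel matrix with rows
`(0!x₀, …, (k-1)!x_{k-1})` and `(1!x₁, …, k!x_k)` contains no nonzero quadratic form of
rank at most 2: if `q ∈ I` is represented by a symmetric matrix `A` of rank `≤ 2`,
then `q = 0`. -/
theorem hankel_ideal_no_low_rank_quadrics (k : ℕ) (hk : 2 ≤ k)
    (q : MvPolynomial (Fin (k + 1)) ℝ)
    (hq : q ∈ Submodule.span ℝ
      {p : MvPolynomial (Fin (k + 1)) ℝ | ∃ a b : Fin k,
        p = (C ((a.val).factorial : ℝ) * X a.castSucc) *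
              (C ((b.val + 1).factorial : ℝ) * X b.succ) -
            (C ((b.val).factorial : ℝ) * X b.castSucc) *
              (C ((a.val + 1).factorial : ℝ) * X a.succ)})
    (A : Matrix (Fin (k + 1)) (Fin (k + 1)) ℝ) (hA : A.IsSymm) (hrank : A.rank ≤ 2)
    (hqA : q = ∑ i : Fin (k + 1), ∑ j : Fin (k + 1), C (A i j) * X i * X j) :
    q = 0 :=
  hankel_ideal_no_low_rank_quadrics_general k q hq A hA hrank hqA
end

section
/- Let k ≥ 1 and let X be the (k+1)×(k+1) nilpotent lower-shift matrix acting on E = ℝ^{k+1} with basis E_0,...,E_k by X·E_i = E_{i+1} for i < k and X·E_k = 0. Then for every real t, the matrix exp(tX) maps the point p(u,v) = (u^k, u^{k-1}v, u^{k-2}v²/2!, ..., v^k/k!) to the point p(u, v + tu). In particular, the one-parameter group exp(tX) preserves the affine cone over the rational normal curve. -/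
/-- The one-parameter group `exp(tX)` generated by the nilpotent lower-shift matrix `X`
(`X·E_i = E_{i+1}`, `X·E_k = 0`) maps the point `p(u,v) = (u^k, u^{k-1}v, …, v^k/k!)` of the
cone over the rational normal curve to `p(u, v + tu)`; in particular it preserves the cone. -/
theorem exp_shift_preserves_rnc_cone (k : ℕ) (hk : 1 ≤ k)
    (Xmat : Matrix (Fin (k + 1)) (Fin (k + 1)) ℝ)
    (hX : Xmat = fun i j => if i.val = j.val + 1 then 1 else 0)
    (p : ℝ → ℝ → Fin (k + 1) → ℝ)
    (hp : p = fun u v j => u ^ (k - j.val) * v ^ j.val / (j.val.factorial : ℝ)) :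
    (∀ t u v : ℝ,
      (∑ m ∈ Finset.range (k + 2), (t ^ m / (m.factorial : ℝ)) • Xmat ^ m).mulVec (p u v) =
        p u (v + t * u)) ∧
    ∀ t u v : ℝ, ∃ u' v' : ℝ,
      (∑ m ∈ Finset.range (k + 2), (t ^ m / (m.factorial : ℝ)) • Xmat ^ m).mulVec (p u v) =
        p u' v' := by
  have shift : ∀ (w : Fin (k+1) → ℝ) (i : Fin (k+1)),
      Xmat.mulVec w i = if h : 0 < i.val then w ⟨i.val - 1, lt_of_le_of_lt (Nat.sub_le _ _) i.isLt⟩ else 0 := by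
    intro w i
    simp only [Matrix.mulVec, dotProduct, hX]
    rcases Nat.eq_zero_or_pos i.val with h0 | h0
    · rw [dif_neg (by omega)]
      apply Finset.sum_eq_zero
      intro j _
      have : ¬ (i.val = j.val + 1) := by omega
      simp [this]
    · rw [dif_pos h0]
      rw [Finset.sum_eq_single (⟨i.val - 1, lt_of_le_of_lt (Nat.sub_le _ _) i.isLt⟩ : Fin (k+1))]
      · rw [if_pos (show i.val = (i.val - 1) + 1 by omega), one_mul]
      · intro j _ hj
        have : ¬ (i.val = j.val + 1) := by
          intro hij
          apply hj
          apply Fin.ext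
          simp
          omega
        simp [this]
      · intro h; exact absurd (Finset.mem_univ _) h
  have powshift : ∀ (m : ℕ) (w : Fin (k+1) → ℝ) (i : Fin (k+1)),
      (Xmat ^ m).mulVec w i = if h : m ≤ i.val then w ⟨i.val - m, lt_of_le_of_lt (Nat.sub_le _ _) i.isLt⟩ else 0 := by
    intro m
    induction m with
    | zero =>
      intro w i
      simp [Matrix.one_mulVec]
    | succ m ih =>
      intro w i
      rw [pow_succ', ← Matrix.mulVec_mulVec, shift]
      by_cases h0 : 0 < i.val
      · rw [dif_pos h0, ih]
        by_cases h : m + 1 ≤ i.val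
        · rw [dif_pos (show m ≤ i.val - 1 by omega), dif_pos h]
          congr 1
          apply Fin.ext
          simp
          omega
        · rw [dif_neg (show ¬ m ≤ i.val - 1 by omega), dif_neg h]
      · rw [dif_neg h0, dif_neg (show ¬ m + 1 ≤ i.val by omega)]
  have hsum : ∀ (t : ℝ) (w : Fin (k+1) → ℝ) (i : Fin (k+1)),
      (∑ m ∈ Finset.range (k + 2), (t ^ m / (m.factorial : ℝ)) • Xmat ^ m).mulVec w i =
      ∑ m ∈ Finset.range (k + 2), (t ^ m / (m.factorial : ℝ)) * ((Xmat ^ m).mulVec w i) := by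
    intro t w i
    simp only [Matrix.mulVec, dotProduct, Matrix.sum_apply, Matrix.smul_apply,
      smul_eq_mul, Finset.sum_mul, Finset.mul_sum, mul_assoc]
    rw [Finset.sum_comm]
  have key : ∀ t u v : ℝ,
      (∑ m ∈ Finset.range (k + 2), (t ^ m / (m.factorial : ℝ)) • Xmat ^ m).mulVec (p u v) =
        p u (v + t * u) := by
    intro t u v
    funext i
    rw [hsum]
    simp only [powshift]
    set n := i.val with hn
    have hnk : n ≤ k := by omega
    rw [← Finset.sum_subset (Finset.range_subset_range.mpr (by omega : n + 1 ≤ k + 2))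
      (by intro m _ hm; simp only [Finset.mem_range] at hm; rw [dif_neg (by omega), mul_zero])]
    subst hp
    rw [show v + t * u = t * u + v by ring]
    show _ = u ^ (k - n) * (t * u + v) ^ n / (n.factorial : ℝ)
    rw [add_pow, Finset.mul_sum, Finset.sum_div]
    apply Finset.sum_congr rfl
    intro m hm
    simp only [Finset.mem_range] at hm
    have hmn : m ≤ n := by omega
    rw [dif_pos (show m ≤ n by omega)]
    show t ^ m / (m.factorial : ℝ) * (u ^ (k - (n - m)) * v ^ (n - m) / ((n - m).factorial : ℝ)) = _
    have h1 : k - (n - m) = (k - n) + m := by omega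
    rw [h1, pow_add, mul_pow]
    have hfac : ((n.choose m : ℝ)) * (m.factorial : ℝ) * ((n-m).factorial : ℝ) = (n.factorial : ℝ) := by
      exact_mod_cast congrArg (Nat.cast : ℕ → ℝ) (Nat.choose_mul_factorial_mul_factorial hmn)
    have f1 : (m.factorial : ℝ) ≠ 0 := Nat.cast_ne_zero.mpr m.factorial_ne_zero
    have f2 : ((n-m).factorial : ℝ) ≠ 0 := Nat.cast_ne_zero.mpr (n-m).factorial_ne_zero
    have f3 : (n.factorial : ℝ) ≠ 0 := Nat.cast_ne_zero.mpr n.factorial_ne_zero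
    field_simp
    linear_combination (-t^m * u^(k-n) * u^m * v^(n-m)) * hfac
  exact ⟨key, fun t u v => ⟨u, v + t * u, key t u v⟩⟩
end

section
/- Let k ≥ 2 and let m be the Lie algebra with basis X, E_1,...,E_k, F_{k-1}, F_k, N and relations [X,E_i] = E_{i+1} (1 ≤ i ≤ k-1), [X,F_{k-1}] = F_k, [F_{k-1},E_1] = N, all other brackets zero. Assign degrees: deg X = deg E_1 = deg F_{k-1} = -1, deg E_i = -i for 2 ≤ i ≤ k, deg F_k = deg N = -2. Then m is a graded Lie algebra (brackets respect degrees), it is nilpotent of nilpotency class k, and m is generated as a Lie algebra by its degree -1 component span{X, E_1, F_{k-1}}. -/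
/-- Structure constants (in one direction) for the algebra `m` with basis
`X, E_1, …, E_k, F_{k-1}, F_k, N`, encoded on `Fin (k+4)` as:
`0 ↦ X`, `i ↦ E_i` for `1 ≤ i ≤ k`, `k+1 ↦ F_{k-1}`, `k+2 ↦ F_k`, `k+3 ↦ N`. -/
def mRel (k : ℕ) (i j l : Fin (k + 4)) : ℝ :=
  if i.val = 0 ∧ 1 ≤ j.val ∧ j.val ≤ k - 1 ∧ l.val = j.val + 1 then 1
  else if i.val = 0 ∧ j.val = k + 1 ∧ l.val = k + 2 then 1
  else if i.val = k + 1 ∧ j.val = 1 ∧ l.val = k + 3 then 1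
  else 0

/-- The skew-symmetrized structure constants of `m`. -/
def mC (k : ℕ) (i j l : Fin (k + 4)) : ℝ := mRel k i j l - mRel k j i l

/-- The bracket of `m` on `ℝ^{k+4}`. -/
def mBracket (k : ℕ) (f g : Fin (k + 4) → ℝ) : Fin (k + 4) → ℝ :=
  fun l => ∑ i : Fin (k + 4), ∑ j : Fin (k + 4), f i * g j * mC k i j l

/-- The degrees of the basis elements: `deg X = deg E_1 = deg F_{k-1} = -1`,
`deg E_i = -i`, `deg F_k = deg N = -2`. -/
def mDeg (k : ℕ) (i : Fin (k + 4)) : ℤ :=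
  if i.val = 0 then -1
  else if i.val ≤ k then -(i.val : ℤ)
  else if i.val = k + 1 then -1
  else -2

/-- Iterated (left-nested) bracket of `n+1` elements of `m`. -/
def mNest (k : ℕ) : (n : ℕ) → (Fin (n + 1) → (Fin (k + 4) → ℝ)) → (Fin (k + 4) → ℝ)
  | 0, f => f 0
  | n + 1, f => mBracket k (f 0) (mNest k n (fun i => f i.succ))

/-!
The structure constants are homogeneous for `mDeg`, so a left-nested bracket of `n + 1`
elements lives in degrees `≤ -(n + 1)`; since every degree is `≥ -k`, all nested brackets of
length `k + 1` vanish. The bracket `[X, [X, …, [X, E_1]]]` with `k - 1` copies of `X` is `E_k`,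
so the class is exactly `k`. Finally `E_2, …, E_k`, `F_k` and `N` are brackets of `X`, `E_1`
and `F_{k-1}`, so any bracket-closed subspace containing the latter contains the whole basis.
-/

lemma mRel_deg (k : ℕ) (i j l : Fin (k + 4)) (h : mRel k i j l ≠ 0) :
    mDeg k l = mDeg k i + mDeg k j := by
  unfold mRel at h
  unfold mDeg
  split_ifs at h <;> first | exact absurd rfl h | split_ifs <;> omega

lemma mC_deg (k : ℕ) (i j l : Fin (k + 4)) (h : mC k i j l ≠ 0) :
    mDeg k l = mDeg k i + mDeg k j := by
  by_cases hij : mRel k i j l = 0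
  · have hji : mRel k j i l ≠ 0 := fun hji => h (by simp [mC, hij, hji])
    rw [mRel_deg k j i l hji, add_comm]
  · exact mRel_deg k i j l hij

lemma mDeg_le_neg_one (k : ℕ) (l : Fin (k + 4)) : mDeg k l ≤ -1 := by
  unfold mDeg; split_ifs <;> omega

lemma neg_le_mDeg {k : ℕ} (hk : 2 ≤ k) (l : Fin (k + 4)) : -(k : ℤ) ≤ mDeg k l := by
  unfold mDeg; split_ifs <;> omega

def SupportedInDegLE (k d : ℕ) (f : Fin (k + 4) → ℝ) : Prop :=
  ∀ l, f l ≠ 0 → mDeg k l ≤ -(d : ℤ)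

lemma supportedInDegLE_one (k : ℕ) (f : Fin (k + 4) → ℝ) : SupportedInDegLE k 1 f :=
  fun l _ => mDeg_le_neg_one k l

lemma SupportedInDegLE.mBracket {k d e : ℕ} {f g : Fin (k + 4) → ℝ}
    (hf : SupportedInDegLE k d f) (hg : SupportedInDegLE k e g) :
    SupportedInDegLE k (d + e) (mBracket k f g) := by
  intro l hl
  obtain ⟨i, -, hi⟩ := Finset.exists_ne_zero_of_sum_ne_zero hl
  obtain ⟨j, -, hj⟩ := Finset.exists_ne_zero_of_sum_ne_zero hi
  obtain ⟨hfg, hc⟩ := mul_ne_zero_iff.1 hj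
  obtain ⟨hfi, hgj⟩ := mul_ne_zero_iff.1 hfg
  have := mC_deg k i j l hc
  have := hf i hfi
  have := hg j hgj
  push_cast
  omega

lemma supportedInDegLE_mNest (k n : ℕ) (f : Fin (n + 1) → Fin (k + 4) → ℝ) :
    SupportedInDegLE k (n + 1) (mNest k n f) := by
  induction n with
  | zero => exact supportedInDegLE_one k _
  | succ n ih =>
    rw [add_comm]
    exact (supportedInDegLE_one k _).mBracket (ih _)

lemma mNest_eq_zero {k : ℕ} (hk : 2 ≤ k) (f : Fin (k + 1) → Fin (k + 4) → ℝ) :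
    mNest k k f = 0 := by
  funext l
  by_contra hl
  have := supportedInDegLE_mNest k k f l hl
  have := neg_le_mDeg hk l
  push_cast at *
  omega

lemma mBracket_single_single (k : ℕ) (a b : Fin (k + 4)) :
    mBracket k (Pi.single a 1) (Pi.single b 1) = fun l => mC k a b l := by
  funext l
  simp [mBracket, Pi.single_apply, ite_mul]

lemma mBracket_X_E (k : ℕ) {j : ℕ} (hj₁ : 1 ≤ j) (hj₂ : j ≤ k - 1) :
    mBracket k (Pi.single (⟨0, by simp⟩ : Fin (k + 4)) 1) (Pi.single ⟨j, by omega⟩ 1) =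
      Pi.single ⟨j + 1, by omega⟩ 1 := by
  rw [mBracket_single_single]
  funext l
  simp only [Pi.single_apply, mC, mRel, Fin.ext_iff]
  split_ifs <;> norm_num at * <;> omega

lemma mBracket_X_F (k : ℕ) :
    mBracket k (Pi.single (⟨0, by simp⟩ : Fin (k + 4)) 1) (Pi.single ⟨k + 1, by simp⟩ 1) =
      Pi.single ⟨k + 2, by simp⟩ 1 := by
  rw [mBracket_single_single]
  funext l
  simp only [Pi.single_apply, mC, mRel, Fin.ext_iff]
  split_ifs <;> norm_num at * <;> omega

lemma mBracket_F_E {k : ℕ} (hk : 1 ≤ k) :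
    mBracket k (Pi.single (⟨k + 1, by simp⟩ : Fin (k + 4)) 1) (Pi.single ⟨1, by simp⟩ 1) =
      Pi.single ⟨k + 3, by simp⟩ 1 := by
  rw [mBracket_single_single]
  funext l
  simp only [Pi.single_apply, mC, mRel, Fin.ext_iff]
  split_ifs <;> norm_num at * <;> omega

lemma mNest_X_E {k n : ℕ} (hn : n ≤ k - 1) :
    mNest k n (fun i => if i.val = n then Pi.single ⟨1, by simp⟩ 1
        else Pi.single (⟨0, by simp⟩ : Fin (k + 4)) 1) =
      Pi.single ⟨n + 1, by omega⟩ 1 := by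
  induction n with
  | zero => simp [mNest]
  | succ n ih =>
    simp only [mNest, Fin.val_succ, add_left_inj, Fin.val_zero, (Nat.succ_ne_zero n).symm,
      if_false]
    rw [ih (by omega)]
    exact mBracket_X_E k (by omega) hn

lemma mNest_ne_zero (k : ℕ) :
    ∃ f : Fin (k - 1 + 1) → Fin (k + 4) → ℝ, mNest k (k - 1) f ≠ 0 := by
  refine ⟨fun i => if i.val = k - 1 then Pi.single ⟨1, by simp⟩ 1
    else Pi.single ⟨0, by simp⟩ 1, ?_⟩
  rw [mNest_X_E le_rfl]
  exact Pi.single_ne_zero_iff.2 one_ne_zero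

lemma submodule_eq_top_of_single_mem {n : ℕ} {S : Submodule ℝ (Fin n → ℝ)}
    (h : ∀ l, Pi.single l (1 : ℝ) ∈ S) : S = ⊤ := by
  rw [eq_top_iff, ← (Pi.basisFun ℝ (Fin n)).span_eq, Submodule.span_le]
  rintro _ ⟨l, rfl⟩
  simpa using h l

lemma single_E_mem {k : ℕ} {S : Submodule ℝ (Fin (k + 4) → ℝ)}
    (hX : Pi.single (⟨0, by simp⟩ : Fin (k + 4)) (1 : ℝ) ∈ S)
    (hE₁ : Pi.single (⟨1, by simp⟩ : Fin (k + 4)) (1 : ℝ) ∈ S)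
    (hS : ∀ f g, f ∈ S → g ∈ S → mBracket k f g ∈ S) {j : ℕ} (hj₁ : 1 ≤ j) (hj₂ : j ≤ k) :
    Pi.single (⟨j, by omega⟩ : Fin (k + 4)) (1 : ℝ) ∈ S := by
  induction j, hj₁ using Nat.le_induction with
  | base => exact hE₁
  | succ j hj ih =>
    rw [← mBracket_X_E k hj (by omega)]
    exact hS _ _ hX (ih (by omega))

lemma eq_top_of_generators_mem {k : ℕ} (hk : 1 ≤ k) (S : Submodule ℝ (Fin (k + 4) → ℝ))
    (hX : Pi.single (⟨0, by simp⟩ : Fin (k + 4)) (1 : ℝ) ∈ S)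
    (hE₁ : Pi.single (⟨1, by simp⟩ : Fin (k + 4)) (1 : ℝ) ∈ S)
    (hF : Pi.single (⟨k + 1, by simp⟩ : Fin (k + 4)) (1 : ℝ) ∈ S)
    (hS : ∀ f g, f ∈ S → g ∈ S → mBracket k f g ∈ S) : S = ⊤ := by
  refine submodule_eq_top_of_single_mem fun ⟨v, hv⟩ => ?_
  obtain rfl | hE | rfl | rfl | rfl :
      v = 0 ∨ (1 ≤ v ∧ v ≤ k) ∨ v = k + 1 ∨ v = k + 2 ∨ v = k + 3 := by omega
  · exact hX
  · exact single_E_mem hX hE₁ hS hE.1 hE.2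
  · exact hF
  · rw [← mBracket_X_F k]
    exact hS _ _ hX hF
  · rw [← mBracket_F_E hk]
    exact hS _ _ hF hE₁

/-- For `k ≥ 2`, the Lie algebra `m` is graded by the given degrees (structure constants
respect degrees), it is nilpotent of nilpotency class exactly `k`, and it is generated by
its degree `-1` component `span{X, E_1, F_{k-1}}`. -/
theorem m_graded_nilpotent_generated (k : ℕ) (hk : 2 ≤ k) :
    (∀ i j l : Fin (k + 4), mC k i j l ≠ 0 → mDeg k l = mDeg k i + mDeg k j) ∧
    (∀ f : Fin (k + 1) → (Fin (k + 4) → ℝ), mNest k k f = 0) ∧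
    (∃ f : Fin (k - 1 + 1) → (Fin (k + 4) → ℝ), mNest k (k - 1) f ≠ 0) ∧
    (∀ S : Submodule ℝ (Fin (k + 4) → ℝ),
      Pi.single (⟨0, by omega⟩ : Fin (k + 4)) (1 : ℝ) ∈ S →
      Pi.single (⟨1, by omega⟩ : Fin (k + 4)) (1 : ℝ) ∈ S →
      Pi.single (⟨k + 1, by omega⟩ : Fin (k + 4)) (1 : ℝ) ∈ S →
      (∀ f g, f ∈ S → g ∈ S → mBracket k f g ∈ S) →
      S = ⊤) := by
  exact ⟨mC_deg k, mNest_eq_zero hk, mNest_ne_zero k, eq_top_of_generators_mem (by omega)⟩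
end

section
/- Let k ≥ 2 and consider the (2k+4)-dimensional vector space g' with basis E_0,...,E_k, F_0,...,F_k, N, X and bracket relations [E_i, F_{k-i}] = (-1)^i N for 0 ≤ i ≤ k, [X,E_i] = E_{i+1} and [X,F_i] = F_{i+1} for 0 ≤ i ≤ k-1, with all other brackets of basis elements zero. Then g' is a Lie algebra (the Jacobi identity holds). -/
/-- Structure constants (in one direction) for the algebra `g'` with basis
`E_0, …, E_k, F_0, …, F_k, N, X`, encoded on `Fin (2k+4)` as:
`i ↦ E_i` for `0 ≤ i ≤ k`, `k+1+j ↦ F_j` for `0 ≤ j ≤ k`, `2k+2 ↦ N`, `2k+3 ↦ X`.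
The relations are `[E_i, F_{k-i}] = (-1)^i N` (`0 ≤ i ≤ k`), `[X,E_i] = E_{i+1}` and
`[X,F_i] = F_{i+1}` (`0 ≤ i ≤ k-1`). -/
def gRel (k : ℕ) (i j l : Fin (2 * k + 4)) : ℝ :=
  if i.val ≤ k ∧ j.val = 2 * k + 1 - i.val ∧ l.val = 2 * k + 2 then (-1 : ℝ) ^ i.val
  else if i.val = 2 * k + 3 ∧ j.val ≤ k - 1 ∧ l.val = j.val + 1 then 1
  else if i.val = 2 * k + 3 ∧ k + 1 ≤ j.val ∧ j.val ≤ 2 * k ∧ l.val = j.val + 1 then 1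
  else 0

/-- The skew-symmetrized structure constants of `g'`. -/
def gC (k : ℕ) (i j l : Fin (2 * k + 4)) : ℝ := gRel k i j l - gRel k j i l

/-- The bilinear skew-symmetric bracket of `g'` on `ℝ^{2k+4}`. -/
def gBracket (k : ℕ) (f g : Fin (2 * k + 4) → ℝ) : Fin (2 * k + 4) → ℝ :=
  fun l => ∑ i : Fin (2 * k + 4), ∑ j : Fin (2 * k + 4), f i * g j * gC k i j l

/-!
Write `f_X` for the `X`-coordinate of `f`, `D = ad X` for the shift `E_i ↦ E_{i+1}`,
`F_i ↦ F_{i+1}`, and `ω(f, g) = ∑ (-1)^i f(E_i) g(F_{k-i})`. Then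
`[f, g] = (ω(f, g) - ω(g, f)) N + f_X D g - g_X D f`.
A bracket has no `X`-component, while `D` and `ω` ignore the `N`-component, so
`[f, [g, h]] = (g_X σ(f, D h) - h_X σ(f, D g)) N + f_X (g_X D²h - h_X D²g)` with
`σ(a, b) = ω(a, b) - ω(b, a)`. The `D²` terms cancel in the cyclic sum, and so do the
`N` terms, because `D` is skew for `ω`: `ω(D f, g) = -ω(f, D g)` makes `σ(f, D h)`
symmetric in `f` and `h`.
-/

section ZeroExtension

variable {M : Type*}

def natCoord [Zero M] {n : ℕ} (f : Fin n → M) (m : ℕ) : M :=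
  if h : m < n then f ⟨m, h⟩ else 0

@[simp]
lemma natCoord_val [Zero M] {n : ℕ} (f : Fin n → M) (i : Fin n) : natCoord f i = f i :=
  dif_pos i.isLt

lemma sum_ite_val_eq [AddCommMonoid M] {n : ℕ} (f : Fin n → M) (m : ℕ) :
    ∑ j : Fin n, (if (j : ℕ) = m then f j else 0) = natCoord f m := by
  unfold natCoord
  split_ifs with h
  · rw [Finset.sum_eq_single ⟨m, h⟩ (fun j _ hj => if_neg (fun hjm => hj (Fin.ext hjm)))
      (fun h' => absurd (Finset.mem_univ _) h')]
    simp
  · exact Finset.sum_eq_zero fun j _ => if_neg (by omega)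

lemma sum_range_ite_le [AddCommMonoid M] (F : ℕ → M) {k n : ℕ} (hkn : k < n) :
    ∑ m ∈ Finset.range n, (if m ≤ k then F m else 0) = ∑ m ∈ Finset.range (k + 1), F m := by
  rw [← Finset.sum_filter]
  congr 1
  ext m
  simp only [Finset.mem_filter, Finset.mem_range]
  omega

end ZeroExtension

section

variable {k : ℕ} (f g h : Fin (2 * k + 4) → ℝ)

/-- `ad X`, sending `E_i ↦ E_{i+1}`, `F_i ↦ F_{i+1}` and `E_k, F_k, N, X ↦ 0`. -/
def gAdX : Fin (2 * k + 4) → ℝ :=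
  fun l => if (1 ≤ (l : ℕ) ∧ (l : ℕ) ≤ k) ∨ (k + 2 ≤ (l : ℕ) ∧ (l : ℕ) ≤ 2 * k + 1)
    then natCoord f (l - 1) else 0

/-- The bilinear form with `ω(E_i, F_{k-i}) = (-1)^i`, zero on all other pairs of basis
vectors. -/
def gPairing : ℝ :=
  ∑ i ∈ Finset.range (k + 1), (-1) ^ i * natCoord f i * natCoord g (2 * k + 1 - i)

lemma natCoord_gAdX (m : ℕ) :
    natCoord (gAdX f) m
      = if (1 ≤ m ∧ m ≤ k) ∨ (k + 2 ≤ m ∧ m ≤ 2 * k + 1) then natCoord f (m - 1) else 0 := by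
  unfold natCoord gAdX natCoord
  split_ifs <;> first | rfl | omega

lemma gPairing_gAdX_left : gPairing (gAdX f) g = -gPairing f (gAdX g) := by
  rw [eq_neg_iff_add_eq_zero]
  simp only [gPairing, natCoord_gAdX]
  rw [Finset.sum_range_succ', Finset.sum_range_succ, if_neg (by omega), if_neg (by omega)]
  simp only [mul_zero, zero_mul, add_zero, ← Finset.sum_add_distrib]
  refine Finset.sum_eq_zero fun i hi => ?_
  rw [Finset.mem_range] at hi
  rw [if_pos (by omega), if_pos (by omega), show i + 1 - 1 = i by omega,
    show 2 * k + 1 - i - 1 = 2 * k + 1 - (i + 1) by omega]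
  ring

-- `j ≤ k - 1` in `gRel` is truncated subtraction: at `k = 0` it would give `[X, E_0] = F_0`.
lemma gRel_eq (hk : 1 ≤ k) (i j l : Fin (2 * k + 4)) :
    gRel k i j l
      = (if (i : ℕ) ≤ k ∧ (l : ℕ) = 2 * k + 2 then
          (if (j : ℕ) = 2 * k + 1 - i then (-1) ^ (i : ℕ) else 0) else 0)
        + (if (i : ℕ) = 2 * k + 3 ∧
            ((1 ≤ (l : ℕ) ∧ (l : ℕ) ≤ k) ∨ (k + 2 ≤ (l : ℕ) ∧ (l : ℕ) ≤ 2 * k + 1)) then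
          (if (j : ℕ) = l - 1 then 1 else 0) else 0) := by
  unfold gRel
  split_ifs <;> first | omega | norm_num

lemma sum_mul_gRel (hk : 1 ≤ k) (i l : Fin (2 * k + 4)) :
    ∑ j, g j * gRel k i j l
      = (if (i : ℕ) ≤ k ∧ (l : ℕ) = 2 * k + 2 then (-1) ^ (i : ℕ) * natCoord g (2 * k + 1 - i)
          else 0)
        + (if (i : ℕ) = 2 * k + 3 then gAdX g l else 0) := by
  simp only [gRel_eq hk, mul_add, Finset.sum_add_distrib]
  congr 1
  · split_ifs
    · simp only [mul_ite, mul_zero, ← sum_ite_val_eq, Finset.mul_sum]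
      exact Finset.sum_congr rfl fun j _ => by split_ifs <;> ring
    · simp
  · by_cases hi : (i : ℕ) = 2 * k + 3
    · simp only [hi, true_and, if_true, gAdX]
      split_ifs
      · simp only [mul_ite, mul_one, mul_zero, sum_ite_val_eq]
      · simp
    · simp [hi]

lemma sum_sum_mul_gRel (hk : 1 ≤ k) (l : Fin (2 * k + 4)) :
    ∑ i, ∑ j, f i * g j * gRel k i j l
      = (if (l : ℕ) = 2 * k + 2 then gPairing f g else 0)
        + natCoord f (2 * k + 3) * gAdX g l := by
  simp only [mul_assoc, ← Finset.mul_sum, sum_mul_gRel g hk, mul_add, Finset.sum_add_distrib]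
  congr 1
  · split_ifs with hl
    · simp only [hl, and_true, gPairing]
      rw [← sum_range_ite_le _ (by omega : k < 2 * k + 4), ← Fin.sum_univ_eq_sum_range]
      refine Finset.sum_congr rfl fun i _ => ?_
      split_ifs
      · rw [natCoord_val]
        ring
      · exact mul_zero _
    · simp [hl]
  · rw [← sum_ite_val_eq, Finset.sum_mul]
    exact Finset.sum_congr rfl fun i _ => by split_ifs <;> ring

lemma gBracket_apply (hk : 1 ≤ k) (l : Fin (2 * k + 4)) :
    gBracket k f g l
      = (if (l : ℕ) = 2 * k + 2 then gPairing f g - gPairing g f else 0)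
        + natCoord f (2 * k + 3) * gAdX g l - natCoord g (2 * k + 3) * gAdX f l := by
  have hswap : ∑ i, ∑ j, f i * g j * gRel k j i l = ∑ i, ∑ j, g i * f j * gRel k i j l := by
    rw [Finset.sum_comm]
    simp only [mul_comm (f _)]
  simp only [gBracket, gC, mul_sub, Finset.sum_sub_distrib, hswap, sum_sum_mul_gRel _ _ hk]
  split_ifs <;> ring

lemma natCoord_gBracket (hk : 1 ≤ k) (m : ℕ) :
    natCoord (gBracket k f g) m
      = (if m = 2 * k + 2 then gPairing f g - gPairing g f else 0)
        + natCoord f (2 * k + 3) * natCoord (gAdX g) m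
        - natCoord g (2 * k + 3) * natCoord (gAdX f) m := by
  by_cases hm : m < 2 * k + 4
  · simpa [natCoord, hm] using gBracket_apply f g hk ⟨m, hm⟩
  · simp [natCoord, hm, show m ≠ 2 * k + 2 by omega]

lemma natCoord_gBracket_of_ne (hk : 1 ≤ k) {m : ℕ} (hm : m ≠ 2 * k + 2) :
    natCoord (gBracket k f g) m
      = natCoord f (2 * k + 3) * natCoord (gAdX g) m
        - natCoord g (2 * k + 3) * natCoord (gAdX f) m := by
  rw [natCoord_gBracket f g hk, if_neg hm, zero_add]

lemma natCoord_gBracket_X (hk : 1 ≤ k) : natCoord (gBracket k f g) (2 * k + 3) = 0 := by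
  rw [natCoord_gBracket_of_ne f g hk (by omega), natCoord_gAdX, natCoord_gAdX,
    if_neg (by omega), if_neg (by omega)]
  ring

lemma gAdX_gBracket (hk : 1 ≤ k) :
    gAdX (gBracket k f g)
      = natCoord f (2 * k + 3) • gAdX (gAdX g) - natCoord g (2 * k + 3) • gAdX (gAdX f) := by
  funext l
  simp only [Pi.sub_apply, Pi.smul_apply, smul_eq_mul, gAdX]
  split_ifs
  · exact natCoord_gBracket_of_ne f g hk (by omega)
  · ring

lemma gPairing_gBracket_right (hk : 1 ≤ k) :
    gPairing f (gBracket k g h)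
      = natCoord g (2 * k + 3) * gPairing f (gAdX h)
        - natCoord h (2 * k + 3) * gPairing f (gAdX g) := by
  simp only [gPairing, Finset.mul_sum, ← Finset.sum_sub_distrib]
  refine Finset.sum_congr rfl fun i _ => ?_
  rw [natCoord_gBracket_of_ne g h hk (by omega)]
  ring

lemma gPairing_gBracket_left (hk : 1 ≤ k) :
    gPairing (gBracket k g h) f
      = natCoord g (2 * k + 3) * gPairing (gAdX h) f
        - natCoord h (2 * k + 3) * gPairing (gAdX g) f := by
  simp only [gPairing, Finset.mul_sum, ← Finset.sum_sub_distrib]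
  refine Finset.sum_congr rfl fun i hi => ?_
  rw [natCoord_gBracket_of_ne g h hk (by rw [Finset.mem_range] at hi; omega)]
  ring

end

/-- For `k ≥ 2`, the bracket on the `(2k+4)`-dimensional space `g'` with basis
`E_0, …, E_k, F_0, …, F_k, N, X` and relations `[E_i,F_{k-i}] = (-1)^i N`,
`[X,E_i] = E_{i+1}`, `[X,F_i] = F_{i+1}` (all other brackets of basis elements zero)
satisfies the Jacobi identity, hence defines a Lie algebra. -/
theorem gBracket_jacobi (k : ℕ) (hk : 2 ≤ k) (f g h : Fin (2 * k + 4) → ℝ) :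
    gBracket k f (gBracket k g h) + gBracket k g (gBracket k h f) +
      gBracket k h (gBracket k f g) = 0 := by
  have hk₁ : 1 ≤ k := by omega
  funext l
  simp only [Pi.add_apply, Pi.zero_apply, gBracket_apply _ _ hk₁, natCoord_gBracket_X _ _ hk₁,
    gAdX_gBracket _ _ hk₁, Pi.sub_apply, Pi.smul_apply, smul_eq_mul,
    gPairing_gBracket_right _ _ _ hk₁, gPairing_gBracket_left _ _ _ hk₁, gPairing_gAdX_left]
  split_ifs <;> ring
end

section
/- Let k ≥ 2 and let F be a homogeneous polynomial of degree r+2 in x_0,...,x_k (over ℝ, 1 ≤ r ≤ k−2) such that every partial derivative of F of order r lies in the span I of the 2×2 minors of the Hankel matrix with rows (0!x_0,...,(k−1)!x_{k−1}) and (1!x_1,...,k!x_k). Then F vanishes on the r-th secant variety of the rational normal curve C: for any r+1 points p_0,...,p_r on the affine cone over C and any scalars z_0,...,z_r, F(z_0 p_0 + ... + z_r p_r) = 0. -/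
open MvPolynomial

/-- Iterated partial derivative `∂^n F/∂x_{d 0} ⋯ ∂x_{d (n-1)}`. -/
noncomputable def iterPderiv (k : ℕ) :
    (n : ℕ) → (Fin n → Fin (k + 1)) → MvPolynomial (Fin (k + 1)) ℝ →
      MvPolynomial (Fin (k + 1)) ℝ
  | 0, _, F => F
  | n + 1, d, F => iterPderiv k n (fun i => d i.succ) (pderiv (d 0) F)

/-!
Substitute `x = ∑ᵢ yᵢ pᵢ` with `pᵢ` on the cone, so that `G(y) = F(∑ᵢ yᵢ pᵢ)` is homogeneous of
degree `r + 2` in the `r + 1` variables `yᵢ`. By the chain rule each `r`-th partial derivative of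
`G` is a linear combination of `r`-th partial derivatives of `F` composed with the substitution,
hence a quadratic form whose value at the unit vector `eᵢ`, i.e. its `yᵢ²`-coefficient, is a
combination of values at `pᵢ` of elements of `I`; these vanish because the Hankel minors vanish on
the cone. By pigeonhole every monomial of degree `r + 2` in `r + 1` variables is divisible by some
`yᵢ²`, and its coefficient in `G` is a nonzero multiple of the `yᵢ²`-coefficient of an `r`-th
partial derivative of `G`. Hence `G = 0`, and evaluating at `y = z` gives the claim.
-/

open Finsupp

namespace MvPolynomial

variable {R σ τ : Type*} [CommSemiring R]

noncomputable def iteratedPderiv :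
    (n : ℕ) → (Fin n → σ) → MvPolynomial σ R →ₗ[R] MvPolynomial σ R
  | 0, _ => LinearMap.id
  | n + 1, d => iteratedPderiv n (Fin.tail d) ∘ₗ (pderiv (d 0)).toLinearMap

theorem iteratedPderiv_succ (n : ℕ) (d : Fin (n + 1) → σ) (f : MvPolynomial σ R) :
    iteratedPderiv (n + 1) d f = iteratedPderiv n (Fin.tail d) (pderiv (d 0) f) := rfl

theorem exists_coeff_iteratedPderiv_eq_nsmul :
    ∀ (n : ℕ) (d : Fin n → σ) (f : MvPolynomial σ R) (m : σ →₀ ℕ),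
      ∃ c : ℕ, c ≠ 0 ∧
        coeff m (iteratedPderiv n d f) = c • coeff (m + ∑ s, single (d s) 1) f
  | 0, _, f, m => ⟨1, one_ne_zero, by simp [iteratedPderiv]⟩
  | n + 1, d, f, m => by
    obtain ⟨c, hc, hcoeff⟩ :=
      exists_coeff_iteratedPderiv_eq_nsmul n (Fin.tail d) (pderiv (d 0) f) m
    set m' := m + ∑ s, single (Fin.tail d s) 1
    refine ⟨c * (m' (d 0) + 1), by positivity, ?_⟩
    have hm' : m' + single (d 0) 1 = m + ∑ s, single (d s) 1 := by
      rw [Fin.sum_univ_succ]; simp only [m', Fin.tail]; abel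
    rw [iteratedPderiv_succ, hcoeff, coeff_pderiv, hm']
    simp only [nsmul_eq_mul]
    push_cast
    ring

theorem _root_.Finsupp.exists_sum_single_one_eq :
    ∀ (n : ℕ) (β : σ →₀ ℕ), β.degree = n → ∃ d : Fin n → σ, ∑ s, single (d s) 1 = β
  | 0, β, h => ⟨Fin.elim0, by simp [(degree_eq_zero_iff β).1 h]⟩
  | n + 1, β, h => by
    obtain ⟨i, hi⟩ : ∃ i, β i ≠ 0 := by
      by_contra! hβ
      rw [show β = 0 from Finsupp.ext hβ, map_zero] at h
      exact n.succ_ne_zero h.symm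
    have hsplit : single i 1 + (β - single i 1) = β :=
      add_tsub_cancel_of_le (single_le_iff.2 (Nat.one_le_iff_ne_zero.2 hi))
    obtain ⟨d, hd⟩ := Finsupp.exists_sum_single_one_eq n (β - single i 1) (by
      have := congrArg degree hsplit
      rw [map_add, degree_single, h] at this
      omega)
    exact ⟨Fin.cons i d, by rw [Fin.sum_univ_succ]; simpa [hd] using hsplit⟩

theorem _root_.Finsupp.exists_two_le_of_card_lt_degree [Fintype σ] (m : σ →₀ ℕ)
    (h : Fintype.card σ < m.degree) : ∃ i, 2 ≤ m i := by
  rw [degree_eq_sum, Fintype.card_eq_sum_ones] at h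
  obtain ⟨i, -, hi⟩ := Finset.exists_lt_of_sum_lt h
  exact ⟨i, hi⟩

theorem eq_zero_of_coeff_single_two_iteratedPderiv [Fintype σ] [IsAddTorsionFree R] {n : ℕ}
    {G : MvPolynomial σ R} (hcard : Fintype.card σ ≤ n + 1) (hG : G.IsHomogeneous (n + 2))
    (h : ∀ i (d : Fin n → σ), coeff (single i 2) (iteratedPderiv n d G) = 0) : G = 0 := by
  ext m
  rw [coeff_zero]
  by_cases hm : m.degree = n + 2
  swap
  · exact hG.coeff_eq_zero hm
  obtain ⟨i, hi⟩ := m.exists_two_le_of_card_lt_degree (by omega)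
  have hsplit : single i 2 + (m - single i 2) = m := add_tsub_cancel_of_le (single_le_iff.2 hi)
  obtain ⟨d, hd⟩ := (m - single i 2).exists_sum_single_one_eq n (by
    have := congrArg degree hsplit
    rw [map_add, degree_single, hm] at this
    omega)
  obtain ⟨c, hc, hcoeff⟩ := exists_coeff_iteratedPderiv_eq_nsmul n d G (single i 2)
  rw [h, hd, hsplit, eq_comm, nsmul_eq_zero_iff_right hc] at hcoeff
  exact hcoeff

theorem IsHomogeneous.iteratedPderiv {F : MvPolynomial σ R} {m : ℕ} (hF : F.IsHomogeneous m) :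
    ∀ (n : ℕ) (d : Fin n → σ), (iteratedPderiv n d F).IsHomogeneous (m - n)
  | 0, _ => hF
  | n + 1, d => by
    rw [iteratedPderiv_succ, Nat.sub_succ', Nat.sub_right_comm]
    exact hF.pderiv.iteratedPderiv n _

theorem IsHomogeneous.eval_piSingle_one [Fintype σ] [DecidableEq σ] {Q : MvPolynomial σ R}
    {n : ℕ} (hQ : Q.IsHomogeneous n) (i : σ) :
    eval (Pi.single i 1) Q = coeff (single i n) Q := by
  rw [eval_eq', Finset.sum_eq_single (single i n)]
  · simp [Pi.single_apply, Finsupp.single_apply]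
  · intro b hb hne
    obtain ⟨l, hli, hbl⟩ : ∃ l ≠ i, b l ≠ 0 := by
      by_contra! hb'
      have hbi : b = single i (b i) := by
        ext l
        by_cases hl : l = i
        · subst hl; simp
        · simp [hb' l hl, Ne.symm hl]
      have hdeg : b.degree = n := by
        rw [degree_eq_weight_one]
        exact hQ (mem_support_iff.1 hb)
      rw [hbi, degree_single] at hdeg
      exact hne (hdeg ▸ hbi)
    rw [Finset.prod_eq_zero (Finset.mem_univ l) (by simp [hli, hbl]), mul_zero]
  · intro h
    rw [notMem_support_iff.1 h, zero_mul]

theorem pderiv_aeval [Fintype σ] (φ : σ → MvPolynomial τ R) (i : τ) (F : MvPolynomial σ R) :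
    pderiv i (aeval φ F) = ∑ j, pderiv i (φ j) * aeval φ (pderiv j F) := by
  classical
  induction F using MvPolynomial.induction_on with
  | C a => simp
  | add p q hp hq => simp only [map_add, hp, hq, mul_add, Finset.sum_add_distrib]
  | mul_X p j₀ hp =>
    simp only [map_mul, aeval_X, Derivation.leibniz, pderiv_X, hp, smul_eq_mul, mul_add,
      map_add, Finset.sum_add_distrib]
    have hX : ∑ j, pderiv i (φ j) *
          (aeval φ p * aeval φ (Pi.single (M := fun _ => MvPolynomial σ R) j 1 j₀)) =
        aeval φ p * pderiv i (φ j₀) := by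
      simp [Pi.single_apply, mul_comm]
    simp only [hX, Finset.mul_sum, mul_left_comm (φ j₀)]

theorem pderiv_sum_C_mul_X [Fintype σ] (a : σ → R) (i : σ) :
    pderiv i (∑ l, C (a l) * X l) = C (a i) := by
  classical
  simp [pderiv_X, Pi.single_apply]

theorem iteratedPderiv_aeval_mem_span [Fintype σ] (φ : σ → MvPolynomial τ R)
    (hφ : ∀ i j, ∃ a : R, pderiv i (φ j) = C a) :
    ∀ (n : ℕ) (d : Fin n → τ) (F : MvPolynomial σ R),
      iteratedPderiv n d (aeval φ F) ∈
        Submodule.span R (Set.range fun e : Fin n → σ => aeval φ (iteratedPderiv n e F))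
  | 0, _, _ => Submodule.subset_span ⟨Fin.elim0, rfl⟩
  | n + 1, d, F => by
    rw [iteratedPderiv_succ, pderiv_aeval, map_sum]
    refine Submodule.sum_mem _ fun j _ => ?_
    obtain ⟨a, ha⟩ := hφ (d 0) j
    rw [ha, ← smul_eq_C_mul, map_smul]
    refine Submodule.smul_mem _ a (Submodule.span_mono ?_
      (iteratedPderiv_aeval_mem_span φ hφ n (Fin.tail d) (pderiv j F)))
    rintro _ ⟨e, rfl⟩
    exact ⟨Fin.cons j e, rfl⟩

theorem eval_aeval_sum_C_mul_X [Fintype τ] (c : τ → σ → R) (x : τ → R) (P : MvPolynomial σ R) :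
    eval x (aeval (fun j => ∑ i, C (c i j) * X i) P) = eval (fun j => ∑ i, c i j * x i) P := by
  show aeval x (aeval _ P) = _
  rw [aeval_eq_bind₁, aeval_bind₁]
  simp

theorem aeval_sum_C_mul_X_eq_zero_of_eval_iteratedPderiv [Fintype σ] [Fintype τ]
    [IsAddTorsionFree R] {n : ℕ} (hcard : Fintype.card τ ≤ n + 1) (c : τ → σ → R)
    {F : MvPolynomial σ R} (hF : F.IsHomogeneous (n + 2))
    (h : ∀ i (e : Fin n → σ), eval (c i) (iteratedPderiv n e F) = 0) :
    aeval (fun j => ∑ i, C (c i j) * X i) F = 0 := by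
  classical
  set φ : σ → MvPolynomial τ R := fun j => ∑ i, C (c i j) * X i
  have hG : (aeval φ F).IsHomogeneous (n + 2) := by
    simpa using hF.aeval φ fun j => IsHomogeneous.sum _ _ _ fun i _ => isHomogeneous_C_mul_X _ _
  refine eq_zero_of_coeff_single_two_iteratedPderiv hcard hG fun i d => ?_
  have hquad := hG.iteratedPderiv n d
  rw [Nat.add_sub_cancel_left] at hquad
  rw [← hquad.eval_piSingle_one]
  refine (Submodule.span_le (p := LinearMap.ker (aeval (Pi.single i 1)).toLinearMap)).2 ?_
    (iteratedPderiv_aeval_mem_span φ (fun i j => ⟨_, pderiv_sum_C_mul_X _ _⟩) n d F)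
  rintro _ ⟨e, rfl⟩
  refine (eval_aeval_sum_C_mul_X c _ _).trans ?_
  convert h i e using 2
  simp [Pi.single_apply]

end MvPolynomial

theorem iterPderiv_eq_iteratedPderiv (k : ℕ) :
    ∀ (n : ℕ) (d : Fin n → Fin (k + 1)) (F : MvPolynomial (Fin (k + 1)) ℝ),
      iterPderiv k n d F = iteratedPderiv n d F
  | 0, _, _ => rfl
  | n + 1, d, F => iterPderiv_eq_iteratedPderiv k n (Fin.tail d) (pderiv (d 0) F)

def rationalNormalConePoint {K : Type*} [Field K] (k : ℕ) (u v : K) : Fin (k + 1) → K :=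
  fun j => u ^ (k - j.val) * v ^ j.val / (j.val.factorial : K)

noncomputable def hankelMinor {R : Type*} [CommRing R] (k : ℕ) (a b : Fin k) :
    MvPolynomial (Fin (k + 1)) R :=
  (C (a.val.factorial : R) * X a.castSucc) * (C ((b.val + 1).factorial : R) * X b.succ) -
    (C (b.val.factorial : R) * X b.castSucc) * (C ((a.val + 1).factorial : R) * X a.succ)

theorem eval_rationalNormalConePoint_hankelMinor {K : Type*} [Field K] [CharZero K] (k : ℕ)
    (u v : K) (a b : Fin k) : eval (rationalNormalConePoint k u v) (hankelMinor k a b) = 0 := by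
  have hfact (n : ℕ) : (n.factorial : K) ≠ 0 := Nat.cast_ne_zero.2 n.factorial_ne_zero
  have ha : k - a = k - (a + 1) + 1 := by omega
  have hb : k - b = k - (b + 1) + 1 := by omega
  simp only [hankelMinor, rationalNormalConePoint, map_sub, map_mul, eval_C, eval_X,
    Fin.val_castSucc, Fin.val_succ, mul_div_cancel₀ _ (hfact _)]
  rw [ha, hb]
  ring

theorem deriv_in_ideal_implies_vanish_on_secant_general (k r : ℕ)
    (F : MvPolynomial (Fin (k + 1)) ℝ) (hF : F.IsHomogeneous (r + 2))
    (hderiv : ∀ d : Fin r → Fin (k + 1),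
      iterPderiv k r d F ∈ Submodule.span ℝ
        {p : MvPolynomial (Fin (k + 1)) ℝ | ∃ a b : Fin k,
          p = (C ((a.val).factorial : ℝ) * X a.castSucc) *
                (C ((b.val + 1).factorial : ℝ) * X b.succ) -
              (C ((b.val).factorial : ℝ) * X b.castSucc) *
                (C ((a.val + 1).factorial : ℝ) * X a.succ)}) :
    ∀ z u v : Fin (r + 1) → ℝ,
      eval (fun j : Fin (k + 1) =>
        ∑ i : Fin (r + 1),
          z i * (u i ^ (k - j.val) * v i ^ j.val / (j.val.factorial : ℝ))) F = 0 := by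
  intro z u v
  set p : Fin (r + 1) → Fin (k + 1) → ℝ := fun i => rationalNormalConePoint k (u i) (v i)
  have hvanish (i : Fin (r + 1)) (e : Fin r → Fin (k + 1)) :
      eval (p i) (iteratedPderiv r e F) = 0 := by
    rw [← iterPderiv_eq_iteratedPderiv]
    refine (Submodule.span_le (p := LinearMap.ker (aeval (p i)).toLinearMap)).2 ?_ (hderiv e)
    rintro _ ⟨a, b, rfl⟩
    exact eval_rationalNormalConePoint_hankelMinor k (u i) (v i) a b
  have hsecant := congrArg (eval z)
    (aeval_sum_C_mul_X_eq_zero_of_eval_iteratedPderiv (by simp) p hF hvanish)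
  rw [eval_aeval_sum_C_mul_X, map_zero] at hsecant
  simpa [p, rationalNormalConePoint, mul_comm] using hsecant

/-- If `F` is homogeneous of degree `r+2` (`1 ≤ r ≤ k−2`) and all its `r`-th order partial
derivatives lie in the span `I` of the `2×2` Hankel minors, then `F` vanishes on the `r`-th
secant variety of the rational normal curve: it vanishes at every linear combination
`z_0 p_0 + ⋯ + z_r p_r` of `r+1` points of the affine cone over the curve. -/
theorem deriv_in_ideal_implies_vanish_on_secant (k r : ℕ) (hk : 2 ≤ k) (hr1 : 1 ≤ r)
    (hr2 : r + 2 ≤ k) (F : MvPolynomial (Fin (k + 1)) ℝ) (hF : F.IsHomogeneous (r + 2))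
    (hderiv : ∀ d : Fin r → Fin (k + 1),
      iterPderiv k r d F ∈ Submodule.span ℝ
        {p : MvPolynomial (Fin (k + 1)) ℝ | ∃ a b : Fin k,
          p = (C ((a.val).factorial : ℝ) * X a.castSucc) *
                (C ((b.val + 1).factorial : ℝ) * X b.succ) -
              (C ((b.val).factorial : ℝ) * X b.castSucc) *
                (C ((a.val + 1).factorial : ℝ) * X a.succ)}) :
    ∀ z u v : Fin (r + 1) → ℝ,
      eval (fun j : Fin (k + 1) =>
        ∑ i : Fin (r + 1),
          z i * (u i ^ (k - j.val) * v i ^ j.val / (j.val.factorial : ℝ))) F = 0 :=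
  deriv_in_ideal_implies_vanish_on_secant_general k r F hF hderiv
end

section
/- Let k ≥ 2 and 0 ≤ r ≤ k−2. If F is a homogeneous polynomial of degree r+2 in x_0,...,x_k vanishing on all sums of r+1 points of the affine cone over the rational normal curve (i.e., F(z_0 p(u_0,v_0) + ... + z_r p(u_r,v_r)) = 0 for all z_i, u_i, v_i ∈ ℝ, where p(u,v)_j = u^{k-j}v^j/j!), then each first partial derivative ∂F/∂x_j vanishes on all sums of r points of the cone (when r ≥ 1). -/
open MvPolynomial


lemma eval_aeval' {n : ℕ} (t : ℝ) (φ : Fin n → Polynomial ℝ) (F : MvPolynomial (Fin n) ℝ) :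
    Polynomial.eval t (MvPolynomial.aeval φ F) = eval (fun j => (φ j).eval t) F := by
  show (Polynomial.evalRingHom t) (MvPolynomial.aeval φ F) = _
  rw [MvPolynomial.aeval_def, MvPolynomial.eval₂_comp_left (Polynomial.evalRingHom t)]
  rw [MvPolynomial.eval]
  congr 1
  ext x
  simp [MvPolynomial.algebraMap_eq]

lemma coeff_one_aeval {n : ℕ} (a b : Fin n → ℝ) (F : MvPolynomial (Fin n) ℝ) :
    (MvPolynomial.aeval (fun j => Polynomial.C (a j) + Polynomial.C (b j) * Polynomial.X) F).coeff 1
      = ∑ j, b j * eval a (pderiv j F) := by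
  induction F using MvPolynomial.induction_on with
  | C c => simp
  | add p q hp hq => simp [hp, hq, Finset.sum_add_distrib, mul_add]
  | mul_X p i hp =>
    have h0 : (MvPolynomial.aeval (fun j => Polynomial.C (a j) + Polynomial.C (b j) * Polynomial.X) p).coeff 0
        = eval a p := by
      rw [Polynomial.coeff_zero_eq_eval_zero, eval_aeval']
      simp
    set Q := MvPolynomial.aeval (fun j => Polynomial.C (a j) + Polynomial.C (b j) * Polynomial.X) p with hQ
    have lhs : (Q * (Polynomial.C (a i) + Polynomial.C (b i) * Polynomial.X)).coeff 1
        = Q.coeff 1 * a i + Q.coeff 0 * b i := by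
      rw [mul_add, Polynomial.coeff_add, Polynomial.coeff_mul_C, ← mul_assoc,
        Polynomial.coeff_mul_X, Polynomial.coeff_mul_C]
    simp only [map_mul, MvPolynomial.aeval_X]
    rw [lhs, hp, h0]
    simp only [pderiv_mul, pderiv_X, map_add, MvPolynomial.eval_mul, MvPolynomial.eval_X,
      mul_add, Finset.sum_add_distrib]
    have h1 : ∑ x : Fin n, b x * (eval a p * eval a ((Pi.single x 1 : Fin n → MvPolynomial (Fin n) ℝ) i))
        = b i * eval a p := by
      rw [Finset.sum_eq_single i]
      · simp
      · intro x _ hx; simp [Pi.single_apply, hx]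
      · simp
    rw [h1, Finset.sum_mul]
    congr 1
    · exact Finset.sum_congr rfl (fun x _ => by ring)
    · exact mul_comm _ _

/-- If a homogeneous polynomial `F` of degree `r+2` (`0 ≤ r ≤ k−2`, `k ≥ 2`) vanishes on
all linear combinations of `r+1` points of the affine cone over the rational normal curve
`p(u,v)_j = u^{k-j} v^j / j!`, then (when `r ≥ 1`) each first partial derivative `∂F/∂x_j`
vanishes on all linear combinations of `r` points of the cone. -/
theorem vanish_on_secant_pderiv (k r : ℕ) (hk : 2 ≤ k) (hr2 : r + 2 ≤ k) (hr1 : 1 ≤ r)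
    (F : MvPolynomial (Fin (k + 1)) ℝ) (hF : F.IsHomogeneous (r + 2))
    (hvanish : ∀ z u v : Fin (r + 1) → ℝ,
      eval (fun j : Fin (k + 1) =>
        ∑ i : Fin (r + 1),
          z i * (u i ^ (k - j.val) * v i ^ j.val / (j.val.factorial : ℝ))) F = 0) :
    ∀ (j₀ : Fin (k + 1)) (z u v : Fin r → ℝ),
      eval (fun j : Fin (k + 1) =>
        ∑ i : Fin r,
          z i * (u i ^ (k - j.val) * v i ^ j.val / (j.val.factorial : ℝ)))
        (pderiv j₀ F) = 0 := by
  intro j₀ z u v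
  set a : Fin (k + 1) → ℝ := fun j =>
    ∑ i : Fin r, z i * (u i ^ (k - j.val) * v i ^ j.val / (j.val.factorial : ℝ)) with ha
  set c : Fin (k + 1) → ℝ := fun j => eval a (pderiv j F) with hc
  show c j₀ = 0
  have key : ∀ U V : ℝ,
      ∑ j : Fin (k + 1), (U ^ (k - j.val) * V ^ j.val / (j.val.factorial : ℝ)) * c j = 0 := by
    intro U V
    set b : Fin (k + 1) → ℝ := fun j => U ^ (k - j.val) * V ^ j.val / (j.val.factorial : ℝ) with hb
    have hq : (MvPolynomial.aeval
        (fun j => Polynomial.C (a j) + Polynomial.C (b j) * Polynomial.X) F) = (0 : Polynomial ℝ) := by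
      apply Polynomial.funext
      intro t
      rw [eval_aeval', Polynomial.eval_zero]
      simp only [Polynomial.eval_add, Polynomial.eval_C, Polynomial.eval_mul,
        Polynomial.eval_X]
      have harg : (fun j : Fin (k + 1) => a j + b j * t) = fun j : Fin (k + 1) =>
          ∑ i : Fin (r + 1), (Fin.cons t z : Fin (r+1) → ℝ) i *
            ((Fin.cons U u : Fin (r+1) → ℝ) i ^ (k - j.val) *
              (Fin.cons V v : Fin (r+1) → ℝ) i ^ j.val / (j.val.factorial : ℝ)) := by
        funext j
        rw [Fin.sum_univ_succ]
        simp only [Fin.cons_zero, Fin.cons_succ, ha, hb]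
        ring
      rw [harg]
      exact hvanish _ _ _
    have h1 := coeff_one_aeval a b F
    rw [hq, Polynomial.coeff_zero] at h1
    rw [← h1]
  set P : Polynomial ℝ :=
    ∑ j : Fin (k + 1), Polynomial.C (c j / (j.val.factorial : ℝ)) * Polynomial.X ^ j.val with hP
  have hP0 : P = 0 := by
    apply Polynomial.funext
    intro V
    have := key 1 V
    simp only [one_pow, one_mul] at this
    rw [Polynomial.eval_zero, ← this]
    simp only [hP, Polynomial.eval_finset_sum, Polynomial.eval_mul, Polynomial.eval_C,
      Polynomial.eval_pow, Polynomial.eval_X, Polynomial.eval_zero]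
    exact Finset.sum_congr rfl (fun x _ => by ring)
  have hcoeff : P.coeff j₀.val = c j₀ / (j₀.val.factorial : ℝ) := by
    rw [hP, Polynomial.finset_sum_coeff]
    rw [Finset.sum_eq_single j₀]
    · simp
    · intro x _ hx
      rw [Polynomial.coeff_C_mul, Polynomial.coeff_X_pow, if_neg (by
        exact fun h => hx (Fin.val_injective h.symm)), mul_zero]
    · simp
  rw [hP0, Polynomial.coeff_zero] at hcoeff
  have := hcoeff.symm
  rw [div_eq_zero_iff] at this
  rcases this with h | h
  · exact h
  · exact absurd h (Nat.cast_ne_zero.mpr (Nat.factorial_ne_zero _))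
end

section
/- For k ≥ 3 and 1 ≤ r ≤ ⌊k/2⌋ − 1, the space of maximal ((r+2)×(r+2)) minors of the (r+2)×(k−r) catalecticant matrix with (i,j)-entry (i+j)!·x_{i+j} (0 ≤ i ≤ r+1, 0 ≤ j ≤ k−r−1) is spanned by binomial(k−r, r+2) linearly independent polynomials; that is, the choose-(r+2)-columns minors of this matrix are linearly independent in ℝ[x_0,...,x_k]. -/
/-!
Order monomials lexicographically with `x_0` most significant. Since the index `i + c j` of the
`(i, j)` entry increases along rows and along columns, the diagonal term `∏ j, x_{j + c j}` is the
unique lex-leading monomial in the Leibniz expansion of the minor with columns `c`. Distinct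
increasing column choices give distinct diagonal monomials, and polynomials with pairwise distinct
leading monomials are linearly independent.
-/

open MvPolynomial

/-- The maximal minor of the `(r+2)×(k-r)` catalecticant matrix with `(i,j)`-entry
`(i+j)!·x_{i+j}` obtained by selecting the columns `c 0, …, c (r+1)`. -/
noncomputable def catMinor (k r : ℕ) (c : Fin (r + 2) → Fin (k - r)) :
    MvPolynomial (Fin (k + 1)) ℝ :=
  Matrix.det (Matrix.of fun i j : Fin (r + 2) =>
    C (((i.val + (c j).val).factorial : ℝ)) *
      X (⟨i.val + (c j).val, by omega⟩ : Fin (k + 1)))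

theorem MonomialOrder.linearIndependent_of_injective_degree {σ R ι : Type*} [CommRing R]
    [NoZeroDivisors R] (m : MonomialOrder σ) {f : ι → MvPolynomial σ R} (hf : ∀ i, f i ≠ 0)
    (hinj : Function.Injective (m.degree ∘ f)) : LinearIndependent R f := by
  classical
  rw [linearIndependent_iff']
  intro s g hsum i hi
  by_contra hgi
  obtain ⟨j, hj, hmax⟩ := (s.filter (g · ≠ 0)).exists_max_image
    (fun j => m.toSyn (m.degree (f j))) ⟨i, Finset.mem_filter.2 ⟨hi, hgi⟩⟩
  rw [Finset.mem_filter] at hj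
  have hcoeff := congrArg (coeff (m.degree (f j))) hsum
  rw [coeff_sum, coeff_zero, Finset.sum_eq_single j, coeff_smul, smul_eq_mul] at hcoeff
  · exact mul_ne_zero hj.2 (m.coeff_degree_ne_zero_iff.2 (hf j)) hcoeff
  · intro l hl hlj
    by_cases hgl : g l = 0
    · rw [hgl, zero_smul, coeff_zero]
    · have hlt : m.toSyn (m.degree (f l)) < m.toSyn (m.degree (f j)) :=
        (hmax l (Finset.mem_filter.2 ⟨hl, hgl⟩)).lt_of_ne
          (m.toSyn.injective.ne (hinj.ne hlj))
      rw [coeff_smul, m.coeff_eq_zero_of_lt hlt, smul_zero]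
  · exact fun h => absurd hj.1 h

theorem strictMono_diag {ι α : Type*} [Preorder ι] [Preorder α] {p : ι → ι → α}
    (h₁ : ∀ b, StrictMono (p · b)) (h₂ : ∀ a, StrictMono (p a)) :
    StrictMono fun i => p i i :=
  fun i i' h => (h₁ i h).trans (h₂ i' h)

section PermExponent

variable {R ι α : Type*} [CommRing R] [Fintype ι]

noncomputable def permExponent (p : ι → ι → α) (σ : Equiv.Perm ι) : α →₀ ℕ :=
  ∑ i, Finsupp.single (p (σ i) i) 1

theorem det_of_C_mul_X [DecidableEq ι] (w : ι → ι → R) (p : ι → ι → α) :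
    (Matrix.of fun a b => C (w a b) * X (p a b) : Matrix ι ι (MvPolynomial α R)).det =
      ∑ σ : Equiv.Perm ι, Equiv.Perm.sign σ •
        monomial (permExponent p σ) (∏ i, w (σ i) i) := by
  rw [Matrix.det_apply]
  refine Finset.sum_congr rfl fun σ _ => ?_
  rw [permExponent, monomial_sum_index, map_prod, ← Finset.prod_mul_distrib]
  rfl

variable {p : ι → ι → α}

theorem permExponent_apply [DecidableEq α] (σ : Equiv.Perm ι) (a : α) :
    permExponent p σ a = ∑ i, if p (σ i) i = a then 1 else 0 := by
  simp only [permExponent, Finsupp.finsetSum_apply, Finsupp.single_apply]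

theorem permExponent_apply_eq_zero_iff (σ : Equiv.Perm ι) (a : α) :
    permExponent p σ a = 0 ↔ ∀ i, p (σ i) i ≠ a := by
  classical
  simp [permExponent_apply]

variable [LinearOrder ι] [LinearOrder α]

/-- Compare at the variable `p j j`, with `j` the least index moved by `σ`: smaller variables
occur in both monomials at the same positions `i < j`, and `p j j` occurs only on the diagonal. -/
theorem toLex_permExponent_lt (h₁ : ∀ b, StrictMono (p · b)) (h₂ : ∀ a, StrictMono (p a))
    {σ : Equiv.Perm ι} (hσ : σ ≠ 1) :
    toLex (permExponent p σ) < toLex (permExponent p 1) := by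
  have hmoved : (Finset.univ.filter fun i => σ i ≠ i).Nonempty := by
    obtain ⟨i, hi⟩ := not_forall.1 (mt Equiv.ext hσ)
    exact ⟨i, Finset.mem_filter.2 ⟨Finset.mem_univ i, hi⟩⟩
  set j := (Finset.univ.filter fun i => σ i ≠ i).min' hmoved
  have hj : σ j ≠ j := (Finset.mem_filter.1 (Finset.min'_mem _ hmoved)).2
  have hfix : ∀ i < j, σ i = i := fun i hi => by
    by_contra h
    exact (Finset.min'_le _ i (Finset.mem_filter.2 ⟨Finset.mem_univ i, h⟩)).not_gt hi
  have hσj : ∀ i, j ≤ i → j ≤ σ i := fun i hi => by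
    by_contra! h
    have : σ i = i := σ.injective (hfix _ h)
    exact (this ▸ h).not_ge hi
  have hdiag := strictMono_diag h₁ h₂
  have hmoved_gt : ∀ i, j ≤ i → p j j < p (σ i) i := fun i hi => by
    rcases hi.lt_or_eq with hi | rfl
    · exact (h₂ j hi).trans_le ((h₁ i).monotone (hσj i hi.le))
    · exact h₁ _ ((hσj j le_rfl).lt_of_ne' hj)
  refine Finsupp.Lex.lt_iff.2 ⟨p j j, fun a ha => ?_, ?_⟩
  · simp only [ofLex_toLex, permExponent_apply]
    refine Finset.sum_congr rfl fun i _ => ?_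
    rcases lt_or_ge i j with hi | hi
    · rw [hfix i hi, Equiv.Perm.one_apply]
    · rw [if_neg ((hmoved_gt i hi).trans' ha).ne', Equiv.Perm.one_apply,
        if_neg (ha.trans_le (hdiag.monotone hi)).ne']
  · simp only [ofLex_toLex]
    rw [(permExponent_apply_eq_zero_iff σ _).2 fun i => ?_, pos_iff_ne_zero,
      Ne, permExponent_apply_eq_zero_iff]
    · exact fun h => h j rfl
    · rcases lt_or_ge i j with hi | hi
      · rw [hfix i hi]; exact (hdiag hi).ne
      · exact (hmoved_gt i hi).ne'

theorem diag_eq_of_permExponent_one_eq {q : ι → ι → α} (hp : StrictMono fun i => p i i)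
    (hq : StrictMono fun i => q i i) (h : permExponent p 1 = permExponent q 1) :
    (fun i => p i i) = fun i => q i i := by
  refine (hp.range_inj hq).1 (Set.ext fun a => ?_)
  have : permExponent p 1 a = 0 ↔ permExponent q 1 a = 0 := by rw [h]
  simp only [permExponent_apply_eq_zero_iff, Equiv.Perm.one_apply] at this
  simpa only [Set.mem_range, not_forall, not_not] using not_congr this

variable {w : ι → ι → R}

theorem coeff_permExponent_one_det (h₁ : ∀ b, StrictMono (p · b))
    (h₂ : ∀ a, StrictMono (p a)) :
    coeff (permExponent p 1) (Matrix.of fun a b => C (w a b) * X (p a b)).det = ∏ i, w i i := by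
  rw [det_of_C_mul_X, coeff_sum, Finset.sum_eq_single 1]
  · simp
  · intro σ _ hσ
    have hne : permExponent p σ ≠ permExponent p 1 :=
      fun h => (toLex_permExponent_lt h₁ h₂ hσ).ne (congrArg toLex h)
    rw [coeff_smul, coeff_monomial, if_neg hne, smul_zero]
  · exact fun h => absurd (Finset.mem_univ 1) h

theorem lex_degree_det [WellFoundedGT α] (h₁ : ∀ b, StrictMono (p · b))
    (h₂ : ∀ a, StrictMono (p a)) (hw : ∏ i, w i i ≠ 0) :
    MonomialOrder.lex.degree (Matrix.of fun a b => C (w a b) * X (p a b)).det =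
      permExponent p 1 := by
  refine MonomialOrder.lex.toSyn.injective (le_antisymm ?_ ?_)
  · refine MonomialOrder.lex.degree_le_iff.2 fun e he => ?_
    rw [mem_support_iff, det_of_C_mul_X, coeff_sum] at he
    obtain ⟨σ, -, hσ⟩ := Finset.exists_ne_zero_of_sum_ne_zero he
    rw [coeff_smul, coeff_monomial] at hσ
    obtain rfl : permExponent p σ = e := by_contra fun h => hσ (by rw [if_neg h, smul_zero])
    rcases eq_or_ne σ 1 with rfl | hσ1
    · exact le_rfl
    · exact (toLex_permExponent_lt h₁ h₂ hσ1).le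
  · exact MonomialOrder.lex.le_degree
      (mem_support_iff.2 (by rwa [coeff_permExponent_one_det h₁ h₂]))

end PermExponent

def catIndex (k r : ℕ) (c : Fin (r + 2) → Fin (k - r)) (a b : Fin (r + 2)) : Fin (k + 1) :=
  ⟨a + c b, by omega⟩

theorem catIndex_strictMono_left (k r : ℕ) (c : Fin (r + 2) → Fin (k - r)) (b : Fin (r + 2)) :
    StrictMono (catIndex k r c · b) := fun a a' h => by
  simp only [catIndex, Fin.mk_lt_mk]; omega

theorem catIndex_strictMono_right (k r : ℕ) {c : Fin (r + 2) → Fin (k - r)} (hc : StrictMono c)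
    (a : Fin (r + 2)) : StrictMono (catIndex k r c a) := fun b b' h => by
  have := hc h
  simp only [catIndex, Fin.mk_lt_mk]; omega

theorem catMinor_eq_det (k r : ℕ) (c : Fin (r + 2) → Fin (k - r)) :
    catMinor k r c = (Matrix.of fun a b : Fin (r + 2) =>
      C ((((a : ℕ) + c b).factorial : ℝ)) * X (catIndex k r c a b)).det := rfl

theorem lex_degree_catMinor (k r : ℕ) {c : Fin (r + 2) → Fin (k - r)} (hc : StrictMono c) :
    MonomialOrder.lex.degree (catMinor k r c) = permExponent (catIndex k r c) 1 := by
  rw [catMinor_eq_det]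
  exact lex_degree_det (catIndex_strictMono_left k r c) (catIndex_strictMono_right k r hc)
    (Finset.prod_ne_zero_iff.2 fun _ _ => Nat.cast_ne_zero.2 (Nat.factorial_ne_zero _))

theorem catMinor_ne_zero (k r : ℕ) {c : Fin (r + 2) → Fin (k - r)} (hc : StrictMono c) :
    catMinor k r c ≠ 0 :=
  ne_zero_iff.2 ⟨_, by
    rw [catMinor_eq_det, coeff_permExponent_one_det (catIndex_strictMono_left k r c)
      (catIndex_strictMono_right k r hc)]
    exact Finset.prod_ne_zero_iff.2 fun _ _ => Nat.cast_ne_zero.2 (Nat.factorial_ne_zero _)⟩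

theorem catalecticant_minors_linearIndependent_general (k r : ℕ) :
    LinearIndependent ℝ
      (fun c : {c : Fin (r + 2) → Fin (k - r) // StrictMono c} => catMinor k r c.val) := by
  refine MonomialOrder.lex.linearIndependent_of_injective_degree
    (fun c => catMinor_ne_zero k r c.2) fun c c' h => Subtype.ext (funext fun j => Fin.ext ?_)
  have hdiag (c : {c : Fin (r + 2) → Fin (k - r) // StrictMono c}) :=
    strictMono_diag (catIndex_strictMono_left k r c) (catIndex_strictMono_right k r c.2)
  simp only [Function.comp_apply, lex_degree_catMinor k r c.2, lex_degree_catMinor k r c'.2] at h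
  have hj := congrArg Fin.val (congrFun (diag_eq_of_permExponent_one_eq (hdiag c) (hdiag c') h) j)
  simp only [catIndex] at hj
  omega

/-- For `k ≥ 3` and `1 ≤ r ≤ ⌊k/2⌋ − 1`, the `C(k−r, r+2)` maximal minors of the
catalecticant matrix (one for each strictly increasing choice of `r+2` of the `k−r`
columns) are linearly independent polynomials in `ℝ[x_0,…,x_k]`. -/
theorem catalecticant_minors_linearIndependent (k r : ℕ) (hk : 3 ≤ k) (hr1 : 1 ≤ r)
    (hr2 : r ≤ k / 2 - 1) :
    LinearIndependent ℝ
      (fun c : {c : Fin (r + 2) → Fin (k - r) // StrictMono c} => catMinor k r c.val) :=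
  catalecticant_minors_linearIndependent_general k r
end
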